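/- For x > 0, define φ(x) = 1 − (1/√(4πx)) ∫_ℝ tanh(u/2) e^{−(u−x)²/(4x)} du, and φ(x) = 1 for x ≤ 0. Then φ is continuous and strictly decreasing on [0,∞), with φ(0) = 1 and φ(x) → 0 as x → ∞. -/

import Mathlib

open Real MeasureTheory Filter

/-- The function φ of the mean-based Gaussian approximation (Approximation 1). -/
noncomputable def phiGA (x : ℝ) : ℝ :=
  if 0 < x then
    1 - (1 / Real.sqrt (4 * Real.pi * x)) *
      ∫ u : ℝ, Real.tanh (u / 2) * Real.exp (-(u - x) ^ 2 / (4 * x))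
  else 1

/-!
Since `tanh t = 1 - e^{-t} / cosh t` and `e^{-u/2} e^{-(u-x)²/(4x)} = e^{-x/4} e^{-u²/(4x)}`,
the substitution `u = 2√x v` gives the closed form
`φ(x) = e^{-x/4} / √π · ∫ e^{-v²} / cosh (√x v) dv`, which also holds at `x = 0`.
The integral is continuous in `x`, equals `√π` at `0` and decreases in `x`, while `e^{-x/4}`
strictly decreases to `0`.
-/

lemma tanh_eq_one_sub_exp_neg_div_cosh (t : ℝ) : tanh t = 1 - exp (-t) / cosh t := by
  rw [tanh_eq_sinh_div_cosh, eq_sub_iff_add_eq, ← add_div, div_eq_one_iff_eq (cosh_pos t).ne',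
    ← cosh_sub_sinh]
  ring

lemma integrable_exp_neg_mul_sq_div_cosh {b : ℝ} (hb : 0 < b) (c : ℝ) :
    Integrable fun v : ℝ => exp (-b * v ^ 2) / cosh (c * v) := by
  refine (integrable_exp_neg_mul_sq hb).mono
    ((by fun_prop : Continuous _).div (by fun_prop) fun v => (cosh_pos _).ne').aestronglyMeasurable
    (.of_forall fun v => ?_)
  rw [norm_of_nonneg (by positivity), norm_of_nonneg (by positivity)]
  exact div_le_self (exp_pos _).le (one_le_cosh _)

noncomputable def gaussSechIntegral (s : ℝ) : ℝ :=
  ∫ v : ℝ, exp (-v ^ 2) / cosh (s * v)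

lemma integrable_exp_neg_sq_div_cosh (s : ℝ) :
    Integrable fun v : ℝ => exp (-v ^ 2) / cosh (s * v) := by
  simpa using integrable_exp_neg_mul_sq_div_cosh one_pos s

lemma continuous_gaussSechIntegral : Continuous gaussSechIntegral := by
  refine continuous_of_dominated (bound := fun v => exp (-v ^ 2))
    (fun s => (integrable_exp_neg_sq_div_cosh s).aestronglyMeasurable) (fun s => ?_)
    (by simpa using integrable_exp_neg_mul_sq one_pos) (.of_forall fun v =>
      continuous_const.div (by fun_prop) fun s => (cosh_pos _).ne')
  refine .of_forall fun v => ?_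
  rw [norm_of_nonneg (by positivity)]
  exact div_le_self (exp_pos _).le (one_le_cosh _)

lemma gaussSechIntegral_zero : gaussSechIntegral 0 = √π := by
  simpa [gaussSechIntegral] using integral_gaussian 1

lemma gaussSechIntegral_pos (s : ℝ) : 0 < gaussSechIntegral s :=
  integral_pos_of_integrable_nonneg_nonzero (x := 0)
    ((by fun_prop : Continuous _).div (by fun_prop) fun v => (cosh_pos _).ne')
    (integrable_exp_neg_sq_div_cosh s) (fun v => by positivity) (by simp)

lemma gaussSechIntegral_anti_abs {s t : ℝ} (h : |s| ≤ |t|) :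
    gaussSechIntegral t ≤ gaussSechIntegral s := by
  refine integral_mono (integrable_exp_neg_sq_div_cosh t) (integrable_exp_neg_sq_div_cosh s)
    fun v => div_le_div_of_nonneg_left (exp_pos _).le (cosh_pos _) ?_
  rw [cosh_le_cosh, abs_mul, abs_mul]
  exact mul_le_mul_of_nonneg_right h (abs_nonneg v)

lemma gaussSechIntegral_le_sqrt_pi (s : ℝ) : gaussSechIntegral s ≤ √π :=
  gaussSechIntegral_zero ▸ gaussSechIntegral_anti_abs (by simp)

noncomputable def phiGAClosedForm (x : ℝ) : ℝ :=
  exp (-x / 4) / √π * gaussSechIntegral √x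

lemma continuous_phiGAClosedForm : Continuous phiGAClosedForm := by
  unfold phiGAClosedForm
  have := continuous_gaussSechIntegral
  fun_prop

lemma phiGAClosedForm_zero : phiGAClosedForm 0 = 1 := by
  simp [phiGAClosedForm, gaussSechIntegral_zero, (sqrt_pos.2 pi_pos).ne']

lemma strictAnti_phiGAClosedForm : StrictAnti phiGAClosedForm := by
  intro x y hxy
  have hJ : gaussSechIntegral √y ≤ gaussSechIntegral √x := gaussSechIntegral_anti_abs <| by
    rw [abs_of_nonneg (sqrt_nonneg x), abs_of_nonneg (sqrt_nonneg y)]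
    exact sqrt_le_sqrt hxy.le
  have hexp : exp (-y / 4) < exp (-x / 4) := exp_lt_exp.2 (by linarith)
  unfold phiGAClosedForm
  calc exp (-y / 4) / √π * gaussSechIntegral √y
      < exp (-x / 4) / √π * gaussSechIntegral √y := by
        gcongr
        exact gaussSechIntegral_pos _
    _ ≤ exp (-x / 4) / √π * gaussSechIntegral √x := by gcongr

lemma phiGAClosedForm_nonneg (x : ℝ) : 0 ≤ phiGAClosedForm x :=
  mul_nonneg (by positivity) (gaussSechIntegral_pos _).le

lemma phiGAClosedForm_le_exp (x : ℝ) : phiGAClosedForm x ≤ exp (-x / 4) := by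
  unfold phiGAClosedForm
  calc exp (-x / 4) / √π * gaussSechIntegral √x ≤ exp (-x / 4) / √π * √π := by
        gcongr
        exact gaussSechIntegral_le_sqrt_pi _
    _ = exp (-x / 4) := div_mul_cancel₀ _ (sqrt_pos.2 pi_pos).ne'

lemma tendsto_phiGAClosedForm_atTop : Tendsto phiGAClosedForm atTop (nhds 0) := by
  have hexp : Tendsto (fun x : ℝ => exp (-x / 4)) atTop (nhds 0) := by
    simpa [Function.comp_def, neg_div] using tendsto_exp_neg_atTop_nhds_zero.comp
      (tendsto_id.atTop_div_const (by norm_num : (0 : ℝ) < 4))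
  exact tendsto_of_tendsto_of_tendsto_of_le_of_le tendsto_const_nhds hexp
    phiGAClosedForm_nonneg phiGAClosedForm_le_exp

section
variable {x : ℝ}

lemma tanh_half_mul_exp_eq (hx : x ≠ 0) (u : ℝ) :
    tanh (u / 2) * exp (-(u - x) ^ 2 / (4 * x))
      = exp (-(4 * x)⁻¹ * (u - x) ^ 2)
        - exp (-x / 4) * (exp (-(4 * x)⁻¹ * u ^ 2) / cosh (2⁻¹ * u)) := by
  have hshift : exp (-(u / 2)) * exp (-(u - x) ^ 2 / (4 * x))
      = exp (-x / 4) * exp (-(4 * x)⁻¹ * u ^ 2) := by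
    rw [← exp_add, ← exp_add]
    field_simp
    ring_nf
  rw [tanh_eq_one_sub_exp_neg_div_cosh, sub_mul, one_mul, div_mul_eq_mul_div, hshift,
    show u / 2 = 2⁻¹ * u by ring, div_eq_mul_inv, neg_div, div_eq_mul_inv]
  ring_nf

lemma integral_exp_neg_sq_shift :
    ∫ u : ℝ, exp (-(4 * x)⁻¹ * (u - x) ^ 2) = √(4 * π * x) := by
  rw [integral_sub_right_eq_self (fun u => exp (-(4 * x)⁻¹ * u ^ 2)), integral_gaussian,
    div_inv_eq_mul]
  ring_nf

lemma integral_exp_neg_sq_div_cosh_half (hx : 0 < x) :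
    ∫ u : ℝ, exp (-(4 * x)⁻¹ * u ^ 2) / cosh (2⁻¹ * u) = 2 * √x * gaussSechIntegral √x := by
  have hs : 0 < 2 * √x := by positivity
  have hsub : gaussSechIntegral √x
      = ∫ v : ℝ, exp (-(4 * x)⁻¹ * (2 * √x * v) ^ 2) / cosh (2⁻¹ * (2 * √x * v)) := by
    refine integral_congr_ae (.of_forall fun v => ?_)
    dsimp only
    rw [mul_pow, mul_pow, sq_sqrt hx.le]
    field_simp
    ring_nf
  rw [hsub, Measure.integral_comp_mul_left (fun u => exp (-(4 * x)⁻¹ * u ^ 2) / cosh (2⁻¹ * u)),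
    abs_of_pos (inv_pos.2 hs), smul_eq_mul, mul_inv_cancel_left₀ hs.ne']

lemma phiGA_eq_closedForm (hx : 0 < x) : phiGA x = phiGAClosedForm x := by
  have hint : ∫ u : ℝ, tanh (u / 2) * exp (-(u - x) ^ 2 / (4 * x))
      = √(4 * π * x) - exp (-x / 4) * (2 * √x * gaussSechIntegral √x) := by
    have hb : 0 < (4 * x)⁻¹ := by positivity
    rw [integral_congr_ae (.of_forall (tanh_half_mul_exp_eq hx.ne')),
      integral_sub ((integrable_exp_neg_mul_sq hb).comp_sub_right x)
        ((integrable_exp_neg_mul_sq_div_cosh hb _).const_mul _),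
      integral_const_mul, integral_exp_neg_sq_shift, integral_exp_neg_sq_div_cosh_half hx]
  have hsqrt : √(4 * π * x) = 2 * √π * √x := by
    rw [sqrt_mul' _ hx.le, sqrt_mul' _ pi_pos.le, show (4 : ℝ) = 2 ^ 2 by norm_num,
      sqrt_sq zero_le_two]
  have hπ : √π ≠ 0 := (sqrt_pos.2 pi_pos).ne'
  rw [phiGA, if_pos hx, hint, hsqrt, phiGAClosedForm]
  field_simp
  ring

end

lemma phiGA_eqOn_closedForm : Set.EqOn phiGA phiGAClosedForm (Set.Ici 0) := by
  intro x hx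
  rcases (Set.mem_Ici.1 hx).eq_or_lt with rfl | hpos
  · rw [phiGAClosedForm_zero, phiGA, if_neg (lt_irrefl 0)]
  · exact phiGA_eq_closedForm hpos

theorem phiGA_properties :
    ContinuousOn phiGA (Set.Ici 0) ∧ StrictAntiOn phiGA (Set.Ici 0) ∧
      phiGA 0 = 1 ∧ Tendsto phiGA atTop (nhds 0) := by
  refine ⟨continuous_phiGAClosedForm.continuousOn.congr phiGA_eqOn_closedForm,
    (strictAnti_phiGAClosedForm.strictAntiOn _).congr phiGA_eqOn_closedForm.symm, if_neg (lt_irrefl 0), ?_⟩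
  exact tendsto_phiGAClosedForm_atTop.congr' <| eventually_ge_atTop 0 |>.mono
    fun x hx => (phiGA_eqOn_closedForm hx).symm
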